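/- arXiv:1901.01691 — 3 statements merged into one kernel-verified Lean document; each statement's English description precedes it below -/
import Mathlib

section
/- Let T be an invertible measure-preserving transformation of a probability space (X, B, m), N a positive integer, and F a measurable set of positive measure. With r_F the first return time of T^N to F and F_n = {x ∈ F : r_F(x) = n}, the entropy-type sum −∑_{n≥1} m(F_n) log m(F_n) is finite. -/
/-!
The sets `T^{Nj} F_n`, `0 ≤ j < n`, are pairwise disjoint copies of `F_n`, so
`∑ n m(F_n) ≤ 1` (Kac). Writing `p_n = m(F_n)`, the inequality `log x ≤ x - 1` at
`x = e^{-n}/p_n` gives `-p_n log p_n ≤ n p_n + e^{-n}`, and both sides are summable.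
-/

open MeasureTheory Set Filter ENNReal NNReal

theorem Real.neg_mul_log_le_mul_add_exp_neg {p : ℝ} (hp : 0 ≤ p) (t : ℝ) :
    -(p * Real.log p) ≤ t * p + Real.exp (-t) - p := by
  rcases hp.eq_or_lt with rfl | hp
  · simpa using (Real.exp_pos _).le
  · have h := Real.log_le_sub_one_of_pos (div_pos (Real.exp_pos (-t)) hp)
    rw [Real.log_div (Real.exp_pos _).ne' hp.ne', Real.log_exp] at h
    have h' := mul_le_mul_of_nonneg_left h hp.le
    rw [mul_sub p (Real.exp (-t) / p) 1, mul_div_cancel₀ _ hp.ne'] at h'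
    linarith

theorem summable_neg_mul_log_of_summable_nat_mul {p : ℕ → ℝ} (h0 : ∀ n, 0 ≤ p n)
    (h1 : ∀ n, p n ≤ 1) (hs : Summable fun n : ℕ => n * p n) :
    Summable fun n => -(p n * Real.log (p n)) :=
  (hs.add Real.summable_exp_neg_nat).of_nonneg_of_le
    (fun n => neg_nonneg.2 <|
      mul_nonpos_of_nonneg_of_nonpos (h0 n) (Real.log_nonpos (h0 n) (h1 n)))
    (fun n => by linarith [Real.neg_mul_log_le_mul_add_exp_neg (h0 n) n, h0 n])

theorem MeasurableEmbedding.iterate {α : Type*} [MeasurableSpace α] {f : α → α}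
    (hf : MeasurableEmbedding f) : ∀ n, MeasurableEmbedding f^[n]
  | 0 => .id
  | n + 1 => (hf.iterate n).comp hf

theorem MeasureTheory.MeasurePreserving.measure_image_emb {α β : Type*} [MeasurableSpace α]
    [MeasurableSpace β] {μ : Measure α} {ν : Measure β} {f : α → β}
    (hμ : MeasurePreserving f μ ν) (hf : MeasurableEmbedding f) (s : Set α) :
    ν (f '' s) = μ s := by
  rw [← hμ.measure_preimage_emb hf, preimage_image_eq _ hf.injective]

section FirstReturn

variable {α : Type*} {f : α → α} {s : Set α}

/-- This is `0` on the points whose orbit never returns to `s`. -/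
noncomputable def firstReturnTime (f : α → α) (s : Set α) (x : α) : ℕ :=
  sInf {n | 1 ≤ n ∧ f^[n] x ∈ s}

def firstReturnSet (f : α → α) (s : Set α) (n : ℕ) : Set α :=
  {x ∈ s | firstReturnTime f s x = n}

theorem firstReturnTime_le {x : α} {k : ℕ} (hk : 1 ≤ k) (h : f^[k] x ∈ s) :
    firstReturnTime f s x ≤ k :=
  Nat.sInf_le ⟨hk, h⟩

theorem firstReturnTime_eq_iff {x : α} {n : ℕ} (hn : n ≠ 0) :
    firstReturnTime f s x = n ↔ f^[n] x ∈ s ∧ ∀ k, 1 ≤ k → k < n → f^[k] x ∉ s := by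
  constructor
  · rintro rfl
    have hmem := Nat.sInf_mem (Nat.nonempty_of_pos_sInf (Nat.pos_of_ne_zero hn))
    exact ⟨hmem.2, fun k hk hlt hks => Nat.notMem_of_lt_sInf hlt ⟨hk, hks⟩⟩
  · rintro ⟨hns, hmin⟩
    refine IsLeast.csInf_eq ⟨⟨Nat.one_le_iff_ne_zero.2 hn, hns⟩, fun k ⟨hk, hks⟩ => ?_⟩
    by_contra! hlt
    exact hmin k hk hlt hks

theorem measurableSet_firstReturnSet [MeasurableSpace α] (hf : Measurable f)
    (hs : MeasurableSet s) {n : ℕ} (hn : n ≠ 0) : MeasurableSet (firstReturnSet f s n) := by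
  have hset : firstReturnSet f s n = s ∩ (f^[n] ⁻¹' s ∩ ⋂ k ∈ Ico 1 n, (f^[k] ⁻¹' s)ᶜ) := by
    ext x
    simp only [firstReturnSet, firstReturnTime_eq_iff hn, mem_ofPred_eq, mem_inter_iff,
      mem_preimage, mem_iInter, mem_Ico, mem_compl_iff, and_imp]
  rw [hset]
  exact hs.inter ((hf.iterate n hs).inter
    (.biInter (to_countable _) fun k _ => (hf.iterate k hs).compl))

theorem disjoint_image_iterate_firstReturnSet (hf : f.Injective) {n n' j j' : ℕ}
    (hj : j < n) (hj' : j' < n') (hne : (n, j) ≠ (n', j')) :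
    Disjoint (f^[j] '' firstReturnSet f s n) (f^[j'] '' firstReturnSet f s n') := by
  wlog hjj : j ≤ j' generalizing n n' j j'
  · exact (this hj' hj hne.symm (le_of_not_ge hjj)).symm
  obtain ⟨d, rfl⟩ := Nat.exists_eq_add_of_le hjj
  rw [Set.disjoint_left]
  rintro _ ⟨a, ⟨has, han⟩, rfl⟩ ⟨b, ⟨hbs, hbn⟩, hab⟩
  rw [Function.iterate_add_apply] at hab
  replace hab := hf.iterate j hab
  rcases Nat.eq_zero_or_pos d with rfl | hd
  · subst hab
    exact hne (by simp_all)
  · have := firstReturnTime_le hd (hab ▸ has : f^[d] b ∈ s)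
    omega

theorem tsum_nat_mul_measure_firstReturnSet_le [MeasurableSpace α] {μ : Measure α}
    (hf : MeasurableEmbedding f) (hμ : MeasurePreserving f μ μ) (hs : MeasurableSet s) :
    ∑' n : ℕ, (n : ℝ≥0∞) * μ (firstReturnSet f s n) ≤ μ univ := by
  rw [ENNReal.tsum_eq_iSup_sum]
  refine iSup_le fun t => ?_
  set tower := t.sigma fun n => Finset.range n
  have hdisj : (tower : Set ((_ : ℕ) × ℕ)).PairwiseDisjoint
      fun p => f^[p.2] '' firstReturnSet f s p.1 := by
    rintro ⟨n, j⟩ hp ⟨n', j'⟩ hq hpq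
    simp only [tower, Finset.coe_sigma, mem_sigma_iff, Finset.mem_coe, Finset.mem_range] at hp hq
    exact disjoint_image_iterate_firstReturnSet hf.injective hp.2 hq.2 (by simpa using hpq)
  have hmeas : ∀ p ∈ tower, MeasurableSet (f^[p.2] '' firstReturnSet f s p.1) := by
    intro p hp
    simp only [tower, Finset.mem_sigma, Finset.mem_range] at hp
    exact (hf.iterate p.2).measurableSet_image.2
      (measurableSet_firstReturnSet hf.measurable hs (by omega))
  calc ∑ n ∈ t, (n : ℝ≥0∞) * μ (firstReturnSet f s n)
      = ∑ p ∈ tower, μ (f^[p.2] '' firstReturnSet f s p.1) := by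
        simp [tower, Finset.sum_sigma, (hμ.iterate _).measure_image_emb (hf.iterate _)]
    _ = μ (⋃ p ∈ tower, f^[p.2] '' firstReturnSet f s p.1) :=
        (measure_biUnion_finset hdisj hmeas).symm
    _ ≤ μ univ := measure_mono (subset_univ _)

end FirstReturn

theorem stmt1_general {X : Type*} [MeasurableSpace X] (m : Measure X) [IsProbabilityMeasure m]
    (T : X ≃ᵐ X) (hT : MeasurePreserving T m m)
    (N : ℕ) (F : Set X) (hF : MeasurableSet F)
    (rF : X → ℕ) (hrF : ∀ x, rF x = sInf {n | 1 ≤ n ∧ (⇑T)^[N * n] x ∈ F})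
    (Fn : ℕ → Set X) (hFn : ∀ n, Fn n = {x ∈ F | rF x = n}) :
    Summable (fun n : ℕ => -((m (Fn n)).toReal * Real.log (m (Fn n)).toReal)) := by
  have hFn' : Fn = firstReturnSet (⇑T)^[N] F := by
    funext n
    simp only [hFn, hrF, firstReturnSet, firstReturnTime, Function.iterate_mul]
  have hKac : ∑' n : ℕ, (n : ℝ≥0∞) * m (Fn n) ≤ 1 := by
    simpa [hFn'] using
      tsum_nat_mul_measure_firstReturnSet_le (T.measurableEmbedding.iterate N) (hT.iterate N) hF
  refine summable_neg_mul_log_of_summable_nat_mul (fun n => toReal_nonneg)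
    (fun n => measureReal_le_one) ?_
  simpa using ENNReal.summable_toReal (ne_top_of_le_ne_top one_ne_top hKac)

/-- The entropy-type sum `−∑_{n≥1} m(F_n) log m(F_n)` over the level sets of the first
return time of `T^N` to `F` is finite. -/
theorem stmt1 {X : Type*} [MeasurableSpace X] (m : Measure X) [IsProbabilityMeasure m]
    (T : X ≃ᵐ X) (hT : MeasurePreserving T m m)
    (N : ℕ) (hN : 1 ≤ N) (F : Set X) (hF : MeasurableSet F) (hFpos : 0 < m F)
    (rF : X → ℕ) (hrF : ∀ x, rF x = sInf {n | 1 ≤ n ∧ (⇑T)^[N * n] x ∈ F})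
    (Fn : ℕ → Set X) (hFn : ∀ n, Fn n = {x ∈ F | rF x = n}) :
    Summable (fun n : ℕ => -((m (Fn n)).toReal * Real.log (m (Fn n)).toReal)) :=
  stmt1_general m T hT N F hF rF hrF Fn hFn
end

section
/- Let {S_j(x) = M_j x + a_j}_{j∈Λ} be a finite affine IFS on ℝ^d and m an ergodic shift-invariant probability measure on the two-sided full shift Σ = Λ^ℤ. Assume the average contraction condition λ := lim_{n→∞} (1/n) ∫ log ‖M_{x_0}⋯M_{x_{n−1}}‖ dm(x) < 0. Then for m-almost every x = (x_n)_{n∈ℤ}, the limit π(x) = lim_{n→∞} (a_{x_0} + M_{x_0}a_{x_1} + ⋯ + M_{x_0}⋯M_{x_{n−1}} a_{x_n}) exists in ℝ^d. -/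
/-!
Average contraction provides `N > 0` and `c < 0` with `∫ log ‖A_N‖ < c N`, where
`A_n(x) = M_{x_0} ⋯ M_{x_{n-1}}`. Splitting `A_{p+N}(x)` at every offset `i ≤ p` into
`A_i(x) A_N(σ^i x)` and telescoping the resulting subadditive inequalities gives
`N log ‖A_{p+N}(x)‖ ≤ ∑_{i ≤ p} log ‖A_N(σ^i x)‖ + O(1)`. The upper half of Birkhoff's ergodic
theorem, obtained from the maximal ergodic theorem and ergodicity of `σ`, bounds the right-hand
side by `c N p + C(x)` for a.e. `x`. Hence `‖A_n(x)‖` decays geometrically and the series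
`∑ A_k(x) a_{x_k}` converges absolutely.
-/

open MeasureTheory Set Filter ENNReal NNReal Topology

/-- The product `M_{x_0} ⋯ M_{x_{n-1}}` of the linear parts of an affine IFS along the
coding `x`. -/
noncomputable def matProd {Λ : Type*} {d : ℕ}
    (M : Λ → (EuclideanSpace ℝ (Fin d) →L[ℝ] EuclideanSpace ℝ (Fin d)))
    (x : ℤ → Λ) (n : ℕ) : EuclideanSpace ℝ (Fin d) →L[ℝ] EuclideanSpace ℝ (Fin d) :=
  ((List.range n).map (fun i => M (x (i : ℤ)))).prod

section BirkhoffSum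

variable {X : Type*} {T : X → X} {g : X → ℝ}

theorem partialSups_birkhoffSum_nonneg (n : ℕ) (x : X) :
    0 ≤ partialSups (birkhoffSum T g) n x := by
  simpa [Pi.partialSups_apply] using le_partialSups_of_le (birkhoffSum T g · x) (Nat.zero_le n)

theorem partialSups_birkhoffSum_le_max (n : ℕ) (x : X) :
    partialSups (birkhoffSum T g) n x ≤ max 0 (g x + partialSups (birkhoffSum T g) n (T x)) := by
  rw [Pi.partialSups_apply]
  refine partialSups_le _ _ _ fun k hk => ?_
  cases k with
  | zero => simp
  | succ k =>
    rw [birkhoffSum_succ', Pi.partialSups_apply]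
    refine le_max_of_le_right ?_
    gcongr
    exact le_partialSups_of_le (birkhoffSum T g · (T x)) (by omega)

theorem bddAbove_range_birkhoffSum_apply_iff (x : X) :
    BddAbove (range fun n => birkhoffSum T g n (T x)) ↔
      BddAbove (range fun n => birkhoffSum T g n x) := by
  simp only [bddAbove_def, forall_mem_range]
  constructor
  · rintro ⟨C, hC⟩
    refine ⟨max 0 (g x + C), fun n => ?_⟩
    cases n with
    | zero => simp
    | succ n => rw [birkhoffSum_succ']; exact le_max_of_le_right (by gcongr; exact hC n)
  · rintro ⟨C, hC⟩
    refine ⟨C - g x, fun n => ?_⟩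
    have := hC (n + 1)
    rw [birkhoffSum_succ'] at this
    linarith

variable [MeasurableSpace X] {m : Measure X}

theorem measurable_birkhoffSum (hT : Measurable T) (hg : Measurable g) (n : ℕ) :
    Measurable (birkhoffSum T g n) :=
  Finset.measurable_sum _ fun i _ => hg.comp (hT.iterate i)

theorem measurable_partialSups_birkhoffSum (hT : Measurable T) (hg : Measurable g) (n : ℕ) :
    Measurable (partialSups (birkhoffSum T g) n) := by
  rw [partialSups_eq_sup'_range]
  exact Finset.measurable_sup' _ fun k _ => measurable_birkhoffSum hT hg k

namespace MeasureTheory.MeasurePreserving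

theorem integrable_birkhoffSum (hT : MeasurePreserving T m m) (hg : Integrable g m) (n : ℕ) :
    Integrable (birkhoffSum T g n) m :=
  integrable_finsetSum _ fun i _ => (hT.iterate i).integrable_comp_of_integrable hg

theorem integrable_partialSups_birkhoffSum (hT : MeasurePreserving T m m)
    (hg : Integrable g m) (n : ℕ) : Integrable (partialSups (birkhoffSum T g) n) m := by
  induction n with
  | zero => simp
  | succ n ih =>
    rw [← Order.succ_eq_add_one, partialSups_succ]
    exact ih.sup (hT.integrable_birkhoffSum hg _)

/-- The maximal ergodic theorem. -/
theorem setIntegral_nonneg_of_partialSups_birkhoffSum_pos (hT : MeasurePreserving T m m)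
    (hg : Measurable g) (hgi : Integrable g m) (n : ℕ) :
    0 ≤ ∫ x in {x | 0 < partialSups (birkhoffSum T g) n x}, g x ∂m := by
  set F := partialSups (birkhoffSum T g) n
  set E := {x | 0 < F x}
  have hFm : Measurable F := measurable_partialSups_birkhoffSum hT.measurable hg n
  have hF : Integrable F m := hT.integrable_partialSups_birkhoffSum hgi n
  have hFT : Integrable (F ∘ T) m := hT.integrable_comp_of_integrable hF
  have hF_E : ∫ x in E, F x ∂m = ∫ x, F x ∂m :=
    setIntegral_eq_integral_of_forall_compl_eq_zero fun x hx =>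
      le_antisymm (not_lt.1 hx) (partialSups_birkhoffSum_nonneg n x)
  have hFT_E : ∫ x in E, F (T x) ∂m ≤ ∫ x, F x ∂m := by
    calc ∫ x in E, F (T x) ∂m ≤ ∫ x, F (T x) ∂m :=
          setIntegral_le_integral hFT (.of_forall fun x => partialSups_birkhoffSum_nonneg n _)
      _ = ∫ x, F x ∂m := by
          rw [← integral_map hT.measurable.aemeasurable (hT.map_eq ▸ hFm.aestronglyMeasurable),
            hT.map_eq]
  calc 0 ≤ ∫ x in E, F x ∂m - ∫ x in E, F (T x) ∂m := by linarith
    _ = ∫ x in E, (F x - F (T x)) ∂m := (integral_sub hF.integrableOn hFT.integrableOn).symm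
    _ ≤ ∫ x in E, g x ∂m :=
      setIntegral_mono_on (hF.sub hFT).integrableOn hgi.integrableOn
        (measurableSet_lt measurable_const hFm) fun x hx => by
          have := (le_max_iff.1 (partialSups_birkhoffSum_le_max n x)).resolve_left hx.not_ge
          linarith

end MeasureTheory.MeasurePreserving

end BirkhoffSum

namespace Ergodic

variable {X : Type*} [MeasurableSpace X] {m : Measure X} {T : X → X} {g : X → ℝ}

theorem ae_bddAbove_birkhoffSum_of_integral_neg (hT : Ergodic T m)
    (hg : Measurable g) (hgi : Integrable g m) (hneg : ∫ x, g x ∂m < 0) :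
    ∀ᵐ x ∂m, BddAbove (range fun n => birkhoffSum T g n x) := by
  set A := {x | BddAbove (range fun n => birkhoffSum T g n x)}
  have hA : MeasurableSet A :=
    measurableSet_bddAbove_range fun n => measurable_birkhoffSum hT.measurable hg n
  -- Were the invariant set `A` null, the sets `E n` below would exhaust `X`, and the maximal
  -- ergodic theorem would force `0 ≤ ∫ g`.
  rcases hT.ae_empty_or_univ hA (Set.ext bddAbove_range_birkhoffSum_apply_iff) with hA0 | hA1
  · set E : ℕ → Set X := fun n => {x | 0 < partialSups (birkhoffSum T g) n x}
    have hE : ∀ n, MeasurableSet (E n) := fun n =>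
      measurableSet_lt measurable_const (measurable_partialSups_birkhoffSum hT.measurable hg n)
    have hEmono : Monotone E := fun i j hij x (hx : 0 < _) =>
      hx.trans_le ((partialSups (birkhoffSum T g)).monotone hij x)
    have hAE : Aᶜ ⊆ ⋃ n, E n := by
      intro x hx
      obtain ⟨_, ⟨n, rfl⟩, hn⟩ := not_bddAbove_iff.1 hx 0
      exact mem_iUnion.2 ⟨n, hn.trans_le (le_partialSups (birkhoffSum T g) n x)⟩
    have hEuniv : ⋃ n, E n =ᵐ[m] univ :=
      ae_eq_univ.2 (measure_mono_null (compl_subset_comm.1 hAE) (ae_eq_empty.1 hA0))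
    have := ge_of_tendsto (tendsto_setIntegral_of_monotone hE hEmono hgi.integrableOn)
      (.of_forall fun n => hT.setIntegral_nonneg_of_partialSups_birkhoffSum_pos hg hgi n)
    rw [setIntegral_congr_set hEuniv, setIntegral_univ] at this
    linarith
  · exact ae_eq_univ.1 hA1

theorem ae_birkhoffSum_le_mul_add [IsProbabilityMeasure m] (hT : Ergodic T m)
    (hg : Integrable g m) {c : ℝ} (hc : ∫ x, g x ∂m < c) :
    ∀ᵐ x ∂m, ∃ C, ∀ n, birkhoffSum T g n x ≤ c * n + C := by
  set g' := hg.aestronglyMeasurable.mk g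
  have hgg' : g =ᵐ[m] g' := hg.aestronglyMeasurable.ae_eq_mk
  have hg' : Measurable g' := hg.aestronglyMeasurable.stronglyMeasurable_mk.measurable
  have hneg : ∫ x, (g' x - c) ∂m < 0 := by
    rw [integral_sub (hg.congr hgg') (integrable_const c), ← integral_congr_ae hgg']
    simpa using hc
  have hsum : ∀ᵐ x ∂m, ∀ n, birkhoffSum T g n x = birkhoffSum T g' n x :=
    ae_all_iff.2 fun n => hT.quasiMeasurePreserving.birkhoffSum_ae_eq_of_ae_eq hgg' n
  filter_upwards [hsum, hT.ae_bddAbove_birkhoffSum_of_integral_neg (hg'.sub measurable_const)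
    ((hg.congr hgg').sub (integrable_const c)) hneg] with x hx ⟨C, hC⟩
  refine ⟨C, fun n => ?_⟩
  have : birkhoffSum T (g' - fun _ => c) n x ≤ C := hC ⟨n, rfl⟩
  have hconst : birkhoffSum T (fun _ => c) n x = n * c := by simp [birkhoffSum]
  rw [birkhoffSum_sub, hconst, ← hx n] at this
  linarith

end Ergodic

theorem Real.log_norm_mul_le {R : Type*} [NormedRing R] {a b : R} (h : a * b ≠ 0) :
    Real.log ‖a * b‖ ≤ Real.log ‖a‖ + Real.log ‖b‖ := by
  rw [← Real.log_mul (norm_ne_zero_iff.2 (left_ne_zero_of_mul h))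
    (norm_ne_zero_iff.2 (right_ne_zero_of_mul h))]
  exact Real.log_le_log (norm_pos_iff.2 h) (norm_mul_le a b)

open Finset in
/-- Telescoping `∑_{i ≤ p} (u (i + N) - u i)` leaves the last `N` values `u (p + 1), …, u (p + N)`,
each within `N κ` of `u (p + N)`, and the first `N` values, each at most `N κ`. -/
theorem mul_le_sum_add_of_step_le_of_block_le {u v : ℕ → ℝ} {N p : ℕ} {κ : ℝ} (hκ : 0 ≤ κ)
    (hu0 : u 0 ≤ 0) (hstep : ∀ k < p + N, u (k + 1) ≤ u k + κ)
    (hblock : ∀ i ≤ p, u (i + N) ≤ u i + v i) :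
    N * u (p + N) ≤ ∑ i ∈ range (p + 1), v i + 2 * N ^ 2 * κ := by
  have hlin : ∀ i l, i + l ≤ p + N → u (i + l) ≤ u i + l * κ := by
    intro i l
    induction l with
    | zero => simp
    | succ l ih =>
      intro h
      have := hstep (i + l) (by omega)
      have := ih (by omega)
      push_cast
      rw [← add_assoc]
      linarith
  have htel : ∑ j ∈ range N, u (p + 1 + j) =
      ∑ j ∈ range N, u j + ∑ i ∈ range (p + 1), (u (N + i) - u i) := by
    have h1 := sum_range_add u (p + 1) N
    have h2 := sum_range_add u N (p + 1)
    rw [add_comm N] at h2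
    rw [sum_sub_distrib]
    linarith
  have hhead : ∀ j < N, u j ≤ N * κ := fun j hj => by
    have := hlin 0 j (by omega)
    have : (j : ℝ) ≤ N := by exact_mod_cast hj.le
    rw [zero_add] at *
    nlinarith
  have htail : ∀ j < N, u (p + N) ≤ u (p + 1 + j) + N * κ := by
    intro j hj
    have := hlin (p + 1 + j) (N - 1 - j) (by omega)
    rw [show p + 1 + j + (N - 1 - j) = p + N by omega] at this
    have : ((N - 1 - j : ℕ) : ℝ) ≤ N := by exact_mod_cast (by omega)
    nlinarith
  calc (N : ℝ) * u (p + N) = ∑ j ∈ range N, u (p + N) := by simp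
    _ ≤ ∑ j ∈ range N, (u (p + 1 + j) + N * κ) :=
      sum_le_sum fun j hj => htail j (mem_range.1 hj)
    _ = ∑ j ∈ range N, (u j + N * κ) + ∑ i ∈ range (p + 1), (u (N + i) - u i) := by
      rw [sum_add_distrib, sum_add_distrib, htel]
      ring
    _ ≤ ∑ j ∈ range N, (N * κ + N * κ) + ∑ i ∈ range (p + 1), v i := by
      gcongr with j hj i hi
      · exact hhead j (mem_range.1 hj)
      · have := hblock i (by simp at hi; omega)
        rw [add_comm N]
        linarith
    _ = ∑ i ∈ range (p + 1), v i + 2 * N ^ 2 * κ := by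
      simp only [sum_const, card_range, nsmul_eq_mul]
      ring

theorem iterate_shift {α : Type*} (i : ℕ) (x : ℤ → α) :
    (fun (x : ℤ → α) (n : ℤ) => x (n + 1))^[i] x = fun z => x (z + i) := by
  induction i generalizing x with
  | zero => simp
  | succ i ih =>
    rw [Function.iterate_succ_apply, ih]
    ext z
    push_cast
    ring_nf

section MatProd

variable {Λ : Type*} {d : ℕ}
  (M : Λ → (EuclideanSpace ℝ (Fin d) →L[ℝ] EuclideanSpace ℝ (Fin d)))

theorem matProd_zero (x : ℤ → Λ) : matProd M x 0 = 1 := by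
  simp [matProd]

theorem matProd_succ (x : ℤ → Λ) (n : ℕ) : matProd M x (n + 1) = matProd M x n * M (x n) := by
  simp [matProd, List.range_succ]

theorem matProd_add (x : ℤ → Λ) (s t : ℕ) :
    matProd M x (s + t) = matProd M x s * matProd M (fun z => x (z + s)) t := by
  induction t with
  | zero => simp [matProd_zero]
  | succ t ih =>
    rw [← add_assoc, matProd_succ, ih, matProd_succ, mul_assoc]
    push_cast
    ring_nf

variable {M}

-- `hne` excludes the junk value `Real.log 0 = 0`, which would break subadditivity.
theorem mul_log_norm_matProd_le {κ : ℝ} (hκ : 0 ≤ κ) (hM : ∀ j, Real.log ‖M j‖ ≤ κ)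
    (x : ℤ → Λ) {N p : ℕ} (hne : matProd M x (p + N) ≠ 0) :
    N * Real.log ‖matProd M x (p + N)‖ ≤
      ∑ i ∈ Finset.range (p + 1), Real.log ‖matProd M (fun z => x (z + i)) N‖ +
        2 * N ^ 2 * κ := by
  have hne' : ∀ k ≤ p + N, matProd M x k ≠ 0 := fun k hk => by
    obtain ⟨l, hl⟩ := Nat.exists_eq_add_of_le hk
    rw [hl, matProd_add] at hne
    exact left_ne_zero_of_mul hne
  refine mul_le_sum_add_of_step_le_of_block_le (u := fun k => Real.log ‖matProd M x k‖)
    (v := fun i => Real.log ‖matProd M (fun z => x (z + i)) N‖) hκ ?_ (fun k hk => ?_)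
    (fun i hi => ?_)
  · rw [matProd_zero]
    exact Real.log_nonpos (norm_nonneg _) ContinuousLinearMap.norm_id_le
  · have := hne' (k + 1) (by omega)
    rw [matProd_succ] at this ⊢
    exact (Real.log_norm_mul_le this).trans (by gcongr; exact hM _)
  · have := hne' (i + N) (by omega)
    rw [matProd_add] at this ⊢
    exact Real.log_norm_mul_le this

theorem norm_matProd_add_le_geometric {κ : ℝ} (hκ : 0 ≤ κ) (hM : ∀ j, Real.log ‖M j‖ ≤ κ)
    {x : ℤ → Λ} {N : ℕ} (hN : 0 < N) {c C : ℝ}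
    (hS : ∀ n, birkhoffSum (fun (x : ℤ → Λ) (n : ℤ) => x (n + 1))
      (fun y => Real.log ‖matProd M y N‖) n x ≤ c * N * n + C) (p : ℕ) :
    ‖matProd M x (p + N)‖ ≤ Real.exp ((C + 2 * N ^ 2 * κ) / N + c) * Real.exp c ^ p := by
  by_cases hne : matProd M x (p + N) = 0
  · rw [hne, norm_zero]
    positivity
  have hNR : (0 : ℝ) < N := by exact_mod_cast hN
  have hsum := hS (p + 1)
  simp only [birkhoffSum, iterate_shift] at hsum
  have hlog : Real.log ‖matProd M x (p + N)‖ ≤ (C + 2 * N ^ 2 * κ) / N + c + p * c := by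
    rw [div_add' _ _ _ hNR.ne', div_add' _ _ _ hNR.ne', le_div_iff₀ hNR]
    have := mul_log_norm_matProd_le hκ hM x hne
    push_cast at hsum
    nlinarith
  calc ‖matProd M x (p + N)‖ = Real.exp (Real.log ‖matProd M x (p + N)‖) :=
        (Real.exp_log (norm_pos_iff.2 hne)).symm
    _ ≤ Real.exp ((C + 2 * N ^ 2 * κ) / N + c + p * c) := Real.exp_le_exp.2 hlog
    _ = _ := by rw [Real.exp_add, Real.exp_nat_mul]

theorem summable_matProd_apply_of_norm_le_geometric [Finite Λ]
    (a : Λ → EuclideanSpace ℝ (Fin d)) (x : ℤ → Λ)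
    {N : ℕ} {K r : ℝ} (hr0 : 0 ≤ r) (hr : r < 1) (h : ∀ p, ‖matProd M x (p + N)‖ ≤ K * r ^ p) :
    Summable fun k : ℕ => matProd M x k (a (x k)) := by
  obtain ⟨A, hA⟩ := Finite.exists_le fun j => ‖a j‖
  refine (_root_.summable_nat_add_iff N).1 ?_
  refine ((summable_geometric_of_lt_one hr0 hr).mul_left (K * A)).of_norm_bounded fun p => ?_
  calc ‖matProd M x (p + N) (a (x ↑(p + N)))‖ ≤ ‖matProd M x (p + N)‖ * ‖a (x ↑(p + N))‖ :=
        ContinuousLinearMap.le_opNorm _ _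
    _ ≤ K * r ^ p * A := mul_le_mul (h p) (hA _) (norm_nonneg _) ((norm_nonneg _).trans (h p))
    _ = K * A * r ^ p := by ring

end MatProd

/-- For an affine IFS which is average contracting with respect to an ergodic
shift-invariant measure `m`, the coding map limit
`π(x) = lim_n (a_{x_0} + M_{x_0}a_{x_1} + ⋯ + M_{x_0}⋯M_{x_{n−1}} a_{x_n})`
exists for `m`-a.e. `x`. -/
theorem stmt5 {Λ : Type*} [Fintype Λ] [MeasurableSpace Λ] {d : ℕ}
    (M : Λ → (EuclideanSpace ℝ (Fin d) →L[ℝ] EuclideanSpace ℝ (Fin d)))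
    (a : Λ → EuclideanSpace ℝ (Fin d))
    (m : Measure (ℤ → Λ)) [IsProbabilityMeasure m]
    (herg : Ergodic (fun x (n : ℤ) => x (n + 1)) m)
    (lam : EReal) (hlam_neg : lam < 0)
    (hlam : Tendsto
      (fun n : ℕ => (((∫ x, Real.log ‖matProd M x n‖ ∂m) / n : ℝ) : EReal))
      atTop (𝓝 lam)) :
    ∀ᵐ x ∂m, ∃ y : EuclideanSpace ℝ (Fin d),
      Tendsto (fun n : ℕ => ∑ k ∈ Finset.range (n + 1), matProd M x k (a (x (k : ℤ))))
        atTop (𝓝 y) := by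
  obtain ⟨c, hlam_c, hc⟩ := EReal.lt_iff_exists_real_btwn.1 hlam_neg
  obtain ⟨N, hN⟩ := (hlam.eventually (eventually_lt_nhds hlam_c)).exists
  replace hN : (∫ x, Real.log ‖matProd M x N‖ ∂m) / N < c := EReal.coe_lt_coe_iff.1 hN
  replace hc : c < 0 := EReal.coe_lt_coe_iff.1 hc
  have hN0 : 0 < N := Nat.pos_of_ne_zero fun h => by simp [h] at hN; linarith
  have hint : ∫ x, Real.log ‖matProd M x N‖ ∂m < c * N := (div_lt_iff₀ (by positivity)).1 hN
  obtain ⟨κ, hκ⟩ := Finite.exists_le fun j => Real.log ‖M j‖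
  filter_upwards [herg.ae_birkhoffSum_le_mul_add (.of_integral_ne_zero (by nlinarith)) hint]
    with x ⟨C, hC⟩
  obtain ⟨y, hy⟩ := summable_matProd_apply_of_norm_le_geometric a x (Real.exp_nonneg c)
    (Real.exp_lt_one_iff.2 hc)
    (norm_matProd_add_le_geometric (le_max_right κ 0) (fun j => (hκ j).trans (le_max_left _ _))
      hN0 hC)
  exact ⟨y, hy.tendsto_sum_nat.comp (tendsto_add_atTop_nat 1)⟩
end

section
/- Let π : X → Y be a measurable map from a probability space (X, B, m₁) to a complete separable metric space Y in which the Besicovitch covering lemma holds (e.g. Y = ℝ^d), and let ξ = {π^{-1}(y) : y ∈ Y} be the induced measurable partition. If m₂ is another probability measure on (X, B) strongly equivalent to m₁ (i.e. there is C > 0 with C^{-1}m₁(A) ≤ m₂(A) ≤ C m₁(A) for all A ∈ B), then for m₁-almost every x, the conditional measures (m₁)ₓ^ξ and (m₂)ₓ^ξ are strongly equivalent (with constant C²). -/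
open MeasureTheory Set Filter ENNReal NNReal Topology

/-!
Testing against fibre-saturated sets `π ⁻¹' T`, the disintegration identities give
`∫⁻_{π⁻¹T} c₁ A ∂m₁ = m₁ (π⁻¹T ∩ A) ≤ C m₂ (π⁻¹T ∩ A) = C ∫⁻_{π⁻¹T} c₂ A ∂m₂
  ≤ C² ∫⁻_{π⁻¹T} c₂ A ∂m₁`.
Both integrands are measurable for the σ-algebra pulled back by `π`, so `c₁ · A ≤ C² c₂ · A`
holds `m₁`-a.e. for each `A`. Letting `A` run over a countable algebra generating the σ-algebra
of `X` costs only countably many null sets, and an inequality between finite measures on a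
generating algebra extends to all measurable sets by approximation.
-/

namespace MeasureTheory

lemma exists_countable_isSetAlgebra_generateFrom_eq (X : Type*) [m : MeasurableSpace X]
    [MeasurableSpace.CountablyGenerated X] :
    ∃ 𝒜 : Set (Set X), 𝒜.Countable ∧ IsSetAlgebra 𝒜 ∧ m = MeasurableSpace.generateFrom 𝒜 :=
  ⟨generateSetAlgebra (MeasurableSpace.countableGeneratingSet X),
    countable_generateSetAlgebra MeasurableSpace.countable_countableGeneratingSet,
    isSetAlgebra_generateSetAlgebra, by
      rw [generateFrom_generateSetAlgebra_eq, MeasurableSpace.generateFrom_countableGeneratingSet]⟩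

lemma Measure.le_of_forall_mem_le_of_generateFrom_isSetAlgebra {X : Type*}
    [m : MeasurableSpace X] {𝒜 : Set (Set X)} (h𝒜 : IsSetAlgebra 𝒜)
    (hgen : m = MeasurableSpace.generateFrom 𝒜)
    {μ ν : Measure X} [IsFiniteMeasure μ] [IsFiniteMeasure ν] (h : ∀ t ∈ 𝒜, μ t ≤ ν t) :
    μ ≤ ν := by
  refine Measure.le_iff.2 fun B hB => ENNReal.le_of_forall_pos_le_add fun ε hε _ => ?_
  obtain ⟨t, ht, happrox⟩ :=
    (Measure.MeasureDense.of_generateFrom_isSetAlgebra_finite (μ + ν) h𝒜 hgen).approx B hB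
      (measure_ne_top _ _) ε hε
  rw [ENNReal.ofReal_coe_nnreal, Measure.add_apply, symmDiff_def] at happrox
  calc μ B ≤ μ (B ∩ t) + μ (B \ t) := measure_le_inter_add_sdiff _ _ _
    _ ≤ ν t + μ (B \ t) := add_le_add_left ((measure_mono inter_subset_right).trans (h t ht)) _
    _ ≤ ν (t ∩ B) + ν (t \ B) + μ (B \ t) := add_le_add_left (measure_le_inter_add_sdiff _ _ _) _
    _ ≤ ν B + (μ (B \ t ∪ t \ B) + ν (B \ t ∪ t \ B)) := by
        rw [add_assoc, add_comm (ν (t \ B))]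
        exact add_le_add (measure_mono inter_subset_right)
          (add_le_add (measure_mono subset_union_left) (measure_mono subset_union_right))
    _ ≤ ν B + ε := by gcongr; exact happrox.le

lemma ae_le_of_forall_setLIntegral_le_of_sigmaFinite_trim {X : Type*} {m m₀ : MeasurableSpace X}
    (hm : m ≤ m₀) {μ : Measure[m₀] X} [SigmaFinite (μ.trim hm)] {f g : X → ℝ≥0∞}
    (hf : Measurable[m] f) (hg : Measurable[m] g)
    (h : ∀ s, MeasurableSet[m] s → ∫⁻ x in s, f x ∂μ ≤ ∫⁻ x in s, g x ∂μ) :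
    f ≤ᵐ[μ] g :=
  ae_le_of_ae_le_trim <| ae_le_of_forall_setLIntegral_le_of_sigmaFinite hf fun s hs _ => by
    rw [setLIntegral_trim hm hf hs, setLIntegral_trim hm hg hs]
    exact h s hs

lemma measure_preimage_inter_eq_indicator {X Y : Type*} [MeasurableSpace X] {π : X → Y}
    {ν : Measure X} [IsProbabilityMeasure ν] {x : X} (hx : ν (π ⁻¹' {π x}) = 1) {T : Set Y}
    (hT : MeasurableSet (π ⁻¹' T)) (A : Set X) :
    ν (π ⁻¹' T ∩ A) = (π ⁻¹' T).indicator (fun _ => ν A) x := by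
  by_cases hxT : x ∈ π ⁻¹' T
  · have hfiber : π ⁻¹' {π x} ⊆ π ⁻¹' T := fun z hz => by simp_all
    have hfull : ν (π ⁻¹' T) = 1 := le_antisymm prob_le_one (hx ▸ measure_mono hfiber)
    rw [indicator_of_mem hxT, inter_comm]
    exact measure_inter_conull ((prob_compl_eq_zero_iff hT).2 hfull)
  · have hfiber : π ⁻¹' {π x} ⊆ (π ⁻¹' T)ᶜ := fun z hz => by simp_all
    have hnull : ν (π ⁻¹' T) = 0 :=
      (prob_compl_eq_one_iff hT).1 (le_antisymm prob_le_one (hx ▸ measure_mono hfiber))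
    rw [indicator_of_notMem hxT]
    exact measure_mono_null inter_subset_left hnull

variable {X Y : Type*} [MeasurableSpace X] [MeasurableSpace Y]

/-- `c` is a system of conditional measures of `m` along the partition of `X` into the fibres
of `π`, in the sense of Rohlin. -/
structure IsFiberDisintegration (π : X → Y) (m : Measure X) (c : X → Measure X) : Prop where
  isProbabilityMeasure : ∀ x, IsProbabilityMeasure (c x)
  measurable_comap : ∀ A : Set X, MeasurableSet A →
    Measurable[MeasurableSpace.comap π inferInstance] (fun x => c x A)
  measure_eq_lintegral : ∀ A : Set X, MeasurableSet A → m A = ∫⁻ x, c x A ∂m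
  ae_measure_fiber : ∀ᵐ x ∂m, c x (π ⁻¹' {π x}) = 1

namespace IsFiberDisintegration

variable {π : X → Y} {m₁ m₂ : Measure X} {c₁ c₂ : X → Measure X}

lemma measure_preimage_inter (hc : IsFiberDisintegration π m₁ c₁) (hπ : Measurable π)
    {T : Set Y} (hT : MeasurableSet T) {A : Set X} (hA : MeasurableSet A) :
    m₁ (π ⁻¹' T ∩ A) = ∫⁻ x in π ⁻¹' T, c₁ x A ∂m₁ := by
  rw [hc.measure_eq_lintegral _ ((hπ hT).inter hA), ← lintegral_indicator (hπ hT)]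
  refine lintegral_congr_ae ?_
  filter_upwards [hc.ae_measure_fiber] with x hx
  have := hc.isProbabilityMeasure x
  exact measure_preimage_inter_eq_indicator hx (hπ hT) A

lemma ae_le_mul (hc₁ : IsFiberDisintegration π m₁ c₁) (hc₂ : IsFiberDisintegration π m₂ c₂)
    (hπ : Measurable π) [IsFiniteMeasure m₁] {C D : ℝ≥0∞} (h₁₂ : m₁ ≤ C • m₂)
    (h₂₁ : m₂ ≤ D • m₁) {A : Set X} (hA : MeasurableSet A) :
    ∀ᵐ x ∂m₁, c₁ x A ≤ C * D * c₂ x A := by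
  have hle := hπ.comap_le
  have := isFiniteMeasure_trim (μ := m₁) hle
  have hc₂A := hc₂.measurable_comap A hA
  refine ae_le_of_forall_setLIntegral_le_of_sigmaFinite_trim hle (hc₁.measurable_comap A hA)
    (hc₂A.const_mul _) ?_
  rintro _ ⟨T, hT, rfl⟩
  calc ∫⁻ x in π ⁻¹' T, c₁ x A ∂m₁
      = m₁ (π ⁻¹' T ∩ A) := (hc₁.measure_preimage_inter hπ hT hA).symm
    _ ≤ C * m₂ (π ⁻¹' T ∩ A) := h₁₂ _
    _ = C * ∫⁻ x in π ⁻¹' T, c₂ x A ∂m₂ := by rw [hc₂.measure_preimage_inter hπ hT hA]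
    _ ≤ C * ∫⁻ x in π ⁻¹' T, c₂ x A ∂(D • m₁) := by gcongr
    _ = ∫⁻ x in π ⁻¹' T, C * D * c₂ x A ∂m₁ := by
        rw [Measure.restrict_smul, lintegral_smul_measure, smul_eq_mul,
          lintegral_const_mul _ (hc₂A.mono hle le_rfl), mul_assoc]

end IsFiberDisintegration

end MeasureTheory

theorem stmt7_general {X Y : Type*} [MeasurableSpace X] [StandardBorelSpace X]
    [MeasurableSpace Y]
    (π : X → Y) (hπ : Measurable π)
    (m₁ m₂ : Measure X) [IsProbabilityMeasure m₁] [IsProbabilityMeasure m₂]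
    (C : ℝ≥0∞) (hC' : C ≠ ∞)
    (heq : ∀ A : Set X, MeasurableSet A → m₁ A ≤ C * m₂ A ∧ m₂ A ≤ C * m₁ A)
    (c₁ c₂ : X → Measure X)
    (hc₁prob : ∀ x, IsProbabilityMeasure (c₁ x))
    (hc₂prob : ∀ x, IsProbabilityMeasure (c₂ x))
    (hc₁meas : ∀ A : Set X, MeasurableSet A →
      Measurable[MeasurableSpace.comap π inferInstance] (fun x => c₁ x A))
    (hc₂meas : ∀ A : Set X, MeasurableSet A →
      Measurable[MeasurableSpace.comap π inferInstance] (fun x => c₂ x A))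
    (hc₁dis : ∀ A : Set X, MeasurableSet A → m₁ A = ∫⁻ x, c₁ x A ∂m₁)
    (hc₂dis : ∀ A : Set X, MeasurableSet A → m₂ A = ∫⁻ x, c₂ x A ∂m₂)
    (hc₁fib : ∀ᵐ x ∂m₁, c₁ x (π ⁻¹' {π x}) = 1)
    (hc₂fib : ∀ᵐ x ∂m₂, c₂ x (π ⁻¹' {π x}) = 1) :
    ∀ᵐ x ∂m₁, ∀ A : Set X, MeasurableSet A →
      c₁ x A ≤ C ^ 2 * c₂ x A ∧ c₂ x A ≤ C ^ 2 * c₁ x A := by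
  have hc₁ : IsFiberDisintegration π m₁ c₁ := ⟨hc₁prob, hc₁meas, hc₁dis, hc₁fib⟩
  have hc₂ : IsFiberDisintegration π m₂ c₂ := ⟨hc₂prob, hc₂meas, hc₂dis, hc₂fib⟩
  have h₁₂ : m₁ ≤ C • m₂ := Measure.le_iff.2 fun A hA => by simpa using (heq A hA).1
  have h₂₁ : m₂ ≤ C • m₁ := Measure.le_iff.2 fun A hA => by simpa using (heq A hA).2
  obtain ⟨𝒜, h𝒜, h𝒜alg, hgen⟩ := exists_countable_isSetAlgebra_generateFrom_eq X
  have hmeas : ∀ t ∈ 𝒜, MeasurableSet t := fun t ht =>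
    hgen ▸ MeasurableSpace.measurableSet_generateFrom ht
  have hae₁ : ∀ᵐ x ∂m₁, ∀ t ∈ 𝒜, c₁ x t ≤ C ^ 2 * c₂ x t := (ae_ball_iff h𝒜).2 fun t ht => by
    simpa only [pow_two] using hc₁.ae_le_mul hc₂ hπ h₁₂ h₂₁ (hmeas t ht)
  have hae₂ : ∀ᵐ x ∂m₁, ∀ t ∈ 𝒜, c₂ x t ≤ C ^ 2 * c₁ x t :=
    (Measure.absolutelyContinuous_of_le_smul h₁₂).ae_le <| (ae_ball_iff h𝒜).2 fun t ht => by
      simpa only [pow_two] using hc₂.ae_le_mul hc₁ hπ h₂₁ h₁₂ (hmeas t ht)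
  filter_upwards [hae₁, hae₂] with x hx₁ hx₂ A hA
  have := hc₁prob x
  have := hc₂prob x
  have hC₂ : C ^ 2 ≠ ∞ := pow_ne_top hC'
  have := (c₁ x).smul_finite hC₂
  have := (c₂ x).smul_finite hC₂
  have h₁ : c₁ x ≤ C ^ 2 • c₂ x :=
    Measure.le_of_forall_mem_le_of_generateFrom_isSetAlgebra h𝒜alg hgen (by simpa using hx₁)
  have h₂ : c₂ x ≤ C ^ 2 • c₁ x :=
    Measure.le_of_forall_mem_le_of_generateFrom_isSetAlgebra h𝒜alg hgen (by simpa using hx₂)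
  simpa using And.intro (h₁ A) (h₂ A)

/-- If `m₂` is strongly equivalent to `m₁` (with constant `C`), then for `m₁`-a.e. `x` the
Rohlin conditional measures along the fiber partition of a measurable map `π : X → Y` into
a Besicovitch space are strongly equivalent (with constant `C²`). -/
theorem stmt7 {X Y : Type*} [MeasurableSpace X] [StandardBorelSpace X]
    [MetricSpace Y] [CompleteSpace Y] [SecondCountableTopology Y]
    [MeasurableSpace Y] [BorelSpace Y] [HasBesicovitchCovering Y]
    (π : X → Y) (hπ : Measurable π)
    (m₁ m₂ : Measure X) [IsProbabilityMeasure m₁] [IsProbabilityMeasure m₂]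
    (C : ℝ≥0∞) (hC : 0 < C) (hC' : C ≠ ∞)
    (heq : ∀ A : Set X, MeasurableSet A → m₁ A ≤ C * m₂ A ∧ m₂ A ≤ C * m₁ A)
    (c₁ c₂ : X → Measure X)
    (hc₁prob : ∀ x, IsProbabilityMeasure (c₁ x))
    (hc₂prob : ∀ x, IsProbabilityMeasure (c₂ x))
    (hc₁meas : ∀ A : Set X, MeasurableSet A →
      Measurable[MeasurableSpace.comap π inferInstance] (fun x => c₁ x A))
    (hc₂meas : ∀ A : Set X, MeasurableSet A →
      Measurable[MeasurableSpace.comap π inferInstance] (fun x => c₂ x A))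
    (hc₁dis : ∀ A : Set X, MeasurableSet A → m₁ A = ∫⁻ x, c₁ x A ∂m₁)
    (hc₂dis : ∀ A : Set X, MeasurableSet A → m₂ A = ∫⁻ x, c₂ x A ∂m₂)
    (hc₁fib : ∀ᵐ x ∂m₁, c₁ x (π ⁻¹' {π x}) = 1)
    (hc₂fib : ∀ᵐ x ∂m₂, c₂ x (π ⁻¹' {π x}) = 1) :
    ∀ᵐ x ∂m₁, ∀ A : Set X, MeasurableSet A →
      c₁ x A ≤ C ^ 2 * c₂ x A ∧ c₂ x A ≤ C ^ 2 * c₁ x A :=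
  stmt7_general π hπ m₁ m₂ C hC' heq c₁ c₂ hc₁prob hc₂prob hc₁meas hc₂meas hc₁dis hc₂dis hc₁fib
    hc₂fib
end
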